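/- arXiv:2012.15787 — 5 statements merged into one kernel-verified Lean document; each statement's English description precedes it below -/
import Mathlib

section
/- Let P be a connected finite Γ-colored d-complete poset with top tree T. Then T is connected as a subposet (T cannot be written as a disjoint union of two nonempty subposets with no comparabilities between them). -/
/-!
Common definitions: Dynkin diagram data, Γ-colored posets, and the coloring
properties EC, NA, AC, ICE2, UCB1, LCB1 from the paper, together with
Γ-colored d-complete and Γ-colored minuscule posets, top trees, slant
irreducibility, extensions, lower frontier censuses, and full heaps.
-/

universe u v w

variable {Γ : Type u} {P : Type v}

/-- The integers `θ a b` form a Dynkin diagram datum. -/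
def DynkinDatum (θ : Γ → Γ → ℤ) : Prop :=
  (∀ a : Γ, θ a a = 2) ∧ (∀ a b : Γ, a ≠ b → θ a b ≤ 0) ∧
    (∀ a b : Γ, a ≠ b → (θ a b = 0 ↔ θ b a = 0))

/-- Colors `a` and `b` are adjacent. -/
def AdjColor (θ : Γ → Γ → ℤ) (a b : Γ) : Prop := θ a b < 0

/-- The Dynkin diagram is simply laced. -/
def SimplyLaced (θ : Γ → Γ → ℤ) : Prop :=
  ∀ a b : Γ, a ≠ b → θ a b = 0 ∨ θ a b = -1

/-- All closed intervals are finite. -/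
def LocallyFinitePoset (α : Type*) [PartialOrder α] : Prop :=
  ∀ x y : α, (Set.Icc x y).Finite

/-- A poset is connected if it cannot be written as a disjoint union of two nonempty
subposets with no comparabilities between them. -/
def ConnectedPoset (α : Type*) [PartialOrder α] : Prop :=
  ∀ S : Set α, S.Nonempty → Sᶜ.Nonempty → ∃ x ∈ S, ∃ y ∈ Sᶜ, x ≤ y ∨ y ≤ x

section
variable [PartialOrder P]

/-- (EC) Elements with equal colors are comparable. -/
def ColoredEC (κ : P → Γ) : Prop := ∀ x y : P, κ x = κ y → x ≤ y ∨ y ≤ x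

/-- (NA) Neighbors have adjacent colors. -/
def ColoredNA (θ : Γ → Γ → ℤ) (κ : P → Γ) : Prop :=
  ∀ x y : P, x ⋖ y → AdjColor θ (κ x) (κ y)

/-- (AC) Elements with adjacent colors are comparable. -/
def ColoredAC (θ : Γ → Γ → ℤ) (κ : P → Γ) : Prop :=
  ∀ x y : P, AdjColor θ (κ x) (κ y) → x ≤ y ∨ y ≤ x

/-- (ICE2) Between consecutive elements of a color `a`, the census of colors
adjacent to `a` is two. -/
def ColoredICE2 (θ : Γ → Γ → ℤ) (κ : P → Γ) : Prop :=
  ∀ (a : Γ) (x y : P), κ x = a → κ y = a → x < y → (∀ z ∈ Set.Ioo x y, κ z ≠ a) →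
    (∑ᶠ z ∈ Set.Ioo x y, -θ (κ z) a) = 2

/-- `U(x,P)`: elements above `x` with color adjacent to that of `x`. -/
def USet (θ : Γ → Γ → ℤ) (κ : P → Γ) (x : P) : Set P :=
  {y : P | x < y ∧ AdjColor θ (κ y) (κ x)}

/-- `L(x,P)`: elements below `x` with color adjacent to that of `x`. -/
def LSet (θ : Γ → Γ → ℤ) (κ : P → Γ) (x : P) : Set P :=
  {y : P | y < x ∧ AdjColor θ (κ y) (κ x)}

/-- (UCB1) Upper frontier census bound. -/
def ColoredUCB1 (θ : Γ → Γ → ℤ) (κ : P → Γ) : Prop :=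
  ∀ x : P, (∀ y : P, κ y = κ x → ¬x < y) →
    (USet θ κ x).Finite ∧ (∑ᶠ y ∈ USet θ κ x, -θ (κ y) (κ x)) ≤ 1

/-- (LCB1) Lower frontier census bound. -/
def ColoredLCB1 (θ : Γ → Γ → ℤ) (κ : P → Γ) : Prop :=
  ∀ x : P, (∀ y : P, κ y = κ x → ¬y < x) →
    (LSet θ κ x).Finite ∧ (∑ᶠ y ∈ LSet θ κ x, -θ (κ y) (κ x)) ≤ 1

/-- A Γ-colored d-complete poset: locally finite, surjectively colored, and
satisfying EC, NA, AC, ICE2, and UCB1. -/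
def GColoredDComplete (θ : Γ → Γ → ℤ) (κ : P → Γ) : Prop :=
  LocallyFinitePoset P ∧ Function.Surjective κ ∧ ColoredEC κ ∧ ColoredNA θ κ ∧
    ColoredAC θ κ ∧ ColoredICE2 θ κ ∧ ColoredUCB1 θ κ

/-- A Γ-colored minuscule poset: Γ-colored d-complete and LCB1. -/
def GColoredMinuscule (θ : Γ → Γ → ℤ) (κ : P → Γ) : Prop :=
  GColoredDComplete θ κ ∧ ColoredLCB1 θ κ

/-- The top tree: the set of elements maximal in their color class. -/
def TopTree (κ : P → Γ) : Set P := {x : P | ∀ y : P, κ y = κ x → ¬x < y}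

/-- `x` is covered by `y` within the subposet `S`. -/
def CoversIn (S : Set P) (x y : P) : Prop :=
  x ∈ S ∧ y ∈ S ∧ x < y ∧ ∀ z ∈ S, x < z → ¬z < y

/-- Slant irreducibility of a Γ-colored d-complete poset. -/
def SlantIrreducible (κ : P → Γ) : Prop :=
  ConnectedPoset P ∧ ∀ x y : P, CoversIn (TopTree κ) x y → ∃ z : P, z ≠ y ∧ κ z = κ y

/-- A saturated chain in a subposet `S`: a chain that is convex in `S`. -/
def SaturatedChainIn (S C : Set P) : Prop :=
  C ⊆ S ∧ IsChain (· ≤ ·) C ∧ ∀ x ∈ C, ∀ y ∈ C, ∀ z ∈ S, x < z → z < y → z ∈ C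

/-- The lower frontier census at the element `y`. -/
noncomputable def LCensus (θ : Γ → Γ → ℤ) (κ : P → Γ) (y : P) : ℤ :=
  ∑ᶠ x ∈ LSet θ κ y, -θ (κ x) (κ y)

/-- A full heap: locally finite, surjectively colored, EC, NA, AC, ICE2, and every
color class order-isomorphic to ℤ. -/
def FullHeap (θ : Γ → Γ → ℤ) (κ : P → Γ) : Prop :=
  LocallyFinitePoset P ∧ Function.Surjective κ ∧ ColoredEC κ ∧ ColoredNA θ κ ∧
    ColoredAC θ κ ∧ ColoredICE2 θ κ ∧ ∀ a : Γ, Nonempty ({x : P // κ x = a} ≃o ℤ)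

end

/-- `ι` realizes the colored poset `A` as an order filter of the colored poset `B`. -/
def FilterEmbedding {G : Type*} {A B : Type*} [PartialOrder A] [PartialOrder B]
    (κ : A → G) (κ' : B → G) (ι : A → B) : Prop :=
  (∀ p q : A, ι p ≤ ι q ↔ p ≤ q) ∧ (∀ p : A, κ' (ι p) = κ p) ∧ IsUpperSet (Set.range ι)

/-- `B` is an extension of `A` by the color `a`, with extending element `x`. -/
def IsExtensionBy {G : Type*} {A B : Type*} [PartialOrder A] [PartialOrder B]
    (θ : G → G → ℤ) (κ : A → G) (κ' : B → G) (a : G) (ι : A → B) (x : B) : Prop :=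
  Finite B ∧ GColoredDComplete θ κ' ∧ ConnectedPoset B ∧
    FilterEmbedding κ κ' ι ∧ (Set.range ι)ᶜ = {x} ∧ κ' x = a

/-!
Sending each element of `P` to the top element of its color class is a surjection onto the top
tree `T` (by EC there is only one such element per color). By NA the two ends of a cover have
adjacent colors, so by AC their images in `T` are comparable. Since comparability in the locally
finite poset `P` is generated by covers, a splitting of `T` without comparabilities would pull back
to one of `P`.
-/

section ConnectedPoset

variable {α β : Type*} [PartialOrder α] [PartialOrder β]

theorem mem_iff_mem_of_le_of_forall_covBy [LocallyFiniteOrder α] {S : Set α}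
    (hS : ∀ x y, x ⋖ y → (x ∈ S ↔ y ∈ S)) {x y : α} (hxy : x ≤ y) : x ∈ S ↔ y ∈ S := by
  have hchain := le_iff_reflTransGen_covBy.mp hxy
  clear hxy
  induction hchain with
  | refl => rfl
  | tail _ hcov ih => exact ih.trans (hS _ _ hcov)

theorem ConnectedPoset.exists_covBy_not_mem_iff [LocallyFiniteOrder α]
    (hα : ConnectedPoset α) {S : Set α} (hS : S.Nonempty) (hSc : Sᶜ.Nonempty) :
    ∃ x y, x ⋖ y ∧ ¬(x ∈ S ↔ y ∈ S) := by
  by_contra! hS'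
  obtain ⟨x, hx, y, hy, hxy⟩ := hα S hS hSc
  rcases hxy with hxy | hyx
  · exact hy ((mem_iff_mem_of_le_of_forall_covBy hS' hxy).mp hx)
  · exact hy ((mem_iff_mem_of_le_of_forall_covBy hS' hyx).mpr hx)

theorem ConnectedPoset.of_surjective [LocallyFiniteOrder α] (hα : ConnectedPoset α)
    {f : α → β} (hf : Function.Surjective f)
    (hcov : ∀ x y, x ⋖ y → f x ≤ f y ∨ f y ≤ f x) : ConnectedPoset β := by
  intro S hS hSc
  obtain ⟨x, y, hxy, hxS⟩ := hα.exists_covBy_not_mem_iff (S := f ⁻¹' S)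
    (hS.preimage hf) (hSc.preimage hf)
  by_cases hx : f x ∈ S
  · exact ⟨f x, hx, f y, fun hy => hxS (iff_of_true hx hy), hcov x y hxy⟩
  · exact ⟨f y, (not_iff.mp hxS).mp hx, f x, hx, (hcov x y hxy).symm⟩

end ConnectedPoset

section TopTree

variable [PartialOrder P] {κ : P → Γ}

theorem eq_of_mem_topTree (hEC : ColoredEC κ) {x y : P} (hx : x ∈ TopTree κ)
    (hy : y ∈ TopTree κ) (hxy : κ x = κ y) : x = y := by
  rcases hEC x y hxy with h | h
  · exact h.eq_of_not_lt (hx y hxy.symm)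
  · exact (h.eq_of_not_lt (hy x hxy)).symm

theorem exists_mem_topTree_color_eq [Finite P] (κ : P → Γ) (x : P) :
    ∃ t ∈ TopTree κ, κ t = κ x := by
  obtain ⟨t, ht⟩ := (Set.toFinite {y | κ y = κ x}).exists_maximal ⟨x, rfl⟩
  exact ⟨t, fun y hy => ht.not_gt (hy.trans ht.prop), ht.prop⟩

noncomputable def colorTop [Finite P] (κ : P → Γ) (x : P) : TopTree κ :=
  ⟨(exists_mem_topTree_color_eq κ x).choose, (exists_mem_topTree_color_eq κ x).choose_spec.1⟩

variable [Finite P]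

theorem colorTop_color (κ : P → Γ) (x : P) : κ (colorTop κ x) = κ x :=
  (exists_mem_topTree_color_eq κ x).choose_spec.2

theorem colorTop_surjective (hEC : ColoredEC κ) : Function.Surjective (colorTop κ) :=
  fun t => ⟨t, Subtype.ext <| eq_of_mem_topTree hEC (colorTop κ t).2 t.2 (colorTop_color κ t)⟩

theorem colorTop_comparable_of_covBy {θ : Γ → Γ → ℤ} (hNA : ColoredNA θ κ)
    (hAC : ColoredAC θ κ) {x y : P} (hxy : x ⋖ y) :
    colorTop κ x ≤ colorTop κ y ∨ colorTop κ y ≤ colorTop κ x := by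
  have hadj : AdjColor θ (κ (colorTop κ x)) (κ (colorTop κ y)) := by
    rw [colorTop_color κ x, colorTop_color κ y]
    exact hNA x y hxy
  exact hAC _ _ hadj

end TopTree

theorem topTree_connected_general [PartialOrder P] [Fintype P]
    (θ : Γ → Γ → ℤ) (κ : P → Γ)
    (hdc : GColoredDComplete θ κ) (hconn : ConnectedPoset P) :
    ConnectedPoset ↥(TopTree κ) := by
  classical
  obtain ⟨-, -, hEC, hNA, hAC, -, -⟩ := hdc
  let _ : LocallyFiniteOrder P := Fintype.toLocallyFiniteOrder
  exact hconn.of_surjective (colorTop_surjective hEC)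
    fun _ _ hxy => colorTop_comparable_of_covBy hNA hAC hxy

/-- The top tree of a connected finite Γ-colored d-complete poset is
connected as a subposet. -/
theorem topTree_connected [Fintype Γ] [PartialOrder P] [Fintype P] [Nonempty P]
    (θ : Γ → Γ → ℤ) (κ : P → Γ) (hθ : DynkinDatum θ)
    (hdc : GColoredDComplete θ κ) (hconn : ConnectedPoset P) :
    ConnectedPoset ↥(TopTree κ) :=
  topTree_connected_general θ κ hdc hconn
end

section
/- Let P be a connected finite Γ-colored d-complete poset. Then P has a unique maximal element. If moreover P is Γ-colored minuscule, then P also has a unique minimal element. -/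
/-!
Common definitions: Dynkin diagram data, Γ-colored posets, and the coloring
properties EC, NA, AC, ICE2, UCB1, LCB1 from the paper, together with
Γ-colored d-complete and Γ-colored minuscule posets, top trees, slant
irreducibility, extensions, lower frontier censuses, and full heaps.
-/

universe u v w

variable {Γ : Type u} {P : Type v}

/-!
Upper covers of an element `u` of `P` always have a common upper bound: if `u` is maximal in
its color class, UCB1 allows at most one upper cover, since each one contributes at least `1`
to the upper census by NA; otherwise any `y > u` of the color of `u` lies above every
upper cover of `u` by AC. In a finite poset with this property the principal ideal of a
maximal element `m` is closed upwards (by downward induction), hence is all of `P` when `P` is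
connected, so `m` is the greatest element. Under LCB1 the same argument applies to the dual
poset.
-/

open OrderDual

section Order

variable {α : Type*} [PartialOrder α]

lemma ConnectedPoset.dual (h : ConnectedPoset α) : ConnectedPoset αᵒᵈ := fun S hS hSc => by
  obtain ⟨x, hx, y, hy, hxy⟩ := h (toDual ⁻¹' S) hS hSc
  exact ⟨toDual x, hx, toDual y, hy, hxy.symm⟩

lemma ConnectedPoset.eq_univ_of_isUpperSet_of_isLowerSet (h : ConnectedPoset α) {S : Set α}
    (hS : S.Nonempty) (hup : IsUpperSet S) (hlow : IsLowerSet S) : S = Set.univ := by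
  by_contra hne
  obtain ⟨x, hx, y, hy, hxy | hyx⟩ := h S hS (Set.nonempty_compl.2 hne)
  · exact hy (hup hxy hx)
  · exact hy (hlow hyx hx)

lemma ConnectedPoset.exists_forall_le [Finite α] [Nonempty α] (hconn : ConnectedPoset α)
    (hcov : ∀ u v w : α, u ⋖ v → u ⋖ w → ∃ z, v ≤ z ∧ w ≤ z) : ∃ m : α, ∀ x, x ≤ m := by
  obtain ⟨m, hm⟩ := (Set.toFinite (Set.univ : Set α)).exists_maximal Set.univ_nonempty
  have hup : IsUpperSet (Set.Iic m) := by
    intro u y huy hum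
    induction u using WellFoundedGT.induction generalizing y with
    | _ u ih =>
    obtain rfl | hlt := huy.eq_or_lt
    · exact hum
    obtain ⟨v, huv, hvy⟩ := exists_covBy_le_of_lt hlt
    have hum' : u < m := hum.lt_of_ne fun hum => hm.not_gt (Set.mem_univ v) (hum ▸ huv.lt)
    obtain ⟨w, huw, hwm⟩ := exists_covBy_le_of_lt hum'
    obtain ⟨z, hvz, hwz⟩ := hcov u v w huv huw
    exact ih v huv.lt hvy (hvz.trans (ih w huw.lt hwz hwm))
  refine ⟨m, Set.eq_univ_iff_forall.1 ?_⟩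
  exact hconn.eq_univ_of_isUpperSet_of_isLowerSet ⟨m, le_rfl⟩ hup (isLowerSet_Iic m)

lemma existsUnique_not_lt_of_forall_le {m : α} (hm : ∀ x, x ≤ m) : ∃! m : α, ∀ x, ¬m < x :=
  ⟨m, fun x => (hm x).not_gt, fun m' hm' => (hm m').lt_or_eq.resolve_left (hm' m)⟩

end Order

section Colored

variable {θ : Γ → Γ → ℤ}

lemma DynkinDatum.not_adjColor_self (hθ : DynkinDatum θ) (a : Γ) : ¬AdjColor θ a a := by
  simp [AdjColor, hθ.1 a]

lemma DynkinDatum.adjColor_symm (hθ : DynkinDatum θ) {a b : Γ} (h : AdjColor θ a b) :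
    AdjColor θ b a := by
  have hab : a ≠ b := by rintro rfl; exact hθ.not_adjColor_self a h
  exact lt_of_le_of_ne (hθ.2.1 b a hab.symm) fun h0 => h.ne ((hθ.2.2 a b hab).2 h0)

variable [PartialOrder P] {κ : P → Γ}

lemma ColoredNA.dual (hθ : DynkinDatum θ) (h : ColoredNA θ κ) : ColoredNA θ (κ ∘ ofDual) :=
  fun _ _ hxy => hθ.adjColor_symm (h _ _ hxy.ofDual)

lemma ColoredAC.dual (h : ColoredAC θ κ) : ColoredAC θ (κ ∘ ofDual) :=
  fun x y hxy => (h (ofDual x) (ofDual y) hxy).symm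

lemma ColoredLCB1.dual (h : ColoredLCB1 θ κ) : ColoredUCB1 θ (κ ∘ ofDual) :=
  fun x hx => h (ofDual x) hx

lemma ColoredUCB1.covBy_eq (hθ : DynkinDatum θ) (hNA : ColoredNA θ κ) (hUCB : ColoredUCB1 θ κ)
    {x v w : P} (hx : ∀ y, κ y = κ x → ¬x < y) (hv : x ⋖ v) (hw : x ⋖ w) : v = w := by
  classical
  by_contra hvw
  obtain ⟨hfin, hsum⟩ := hUCB x hx
  have mem : ∀ {y}, x ⋖ y → y ∈ hfin.toFinset := fun hy =>
    hfin.mem_toFinset.2 ⟨hy.lt, hθ.adjColor_symm (hNA _ _ hy)⟩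
  have one_le : ∀ y ∈ hfin.toFinset, 1 ≤ -θ (κ y) (κ x) := fun y hy => by
    have : θ (κ y) (κ x) < 0 := (hfin.mem_toFinset.1 hy).2
    omega
  have hpair :=
    Finset.add_le_sum (fun y hy => zero_le_one.trans (one_le y hy)) (mem hv) (mem hw) hvw
  rw [finsum_mem_eq_finite_toFinset_sum _ hfin] at hsum
  linarith [one_le v (mem hv), one_le w (mem hw)]

lemma exists_upperBound_of_covBy (hθ : DynkinDatum θ) (hNA : ColoredNA θ κ)
    (hAC : ColoredAC θ κ) (hUCB : ColoredUCB1 θ κ) {u v w : P} (hv : u ⋖ v) (hw : u ⋖ w) :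
    ∃ z, v ≤ z ∧ w ≤ z := by
  by_cases hu : ∀ y, κ y = κ u → ¬u < y
  · exact ⟨w, (hUCB.covBy_eq hθ hNA hu hv hw).le, le_rfl⟩
  push Not at hu
  obtain ⟨y, hyu, huy⟩ := hu
  have le_y : ∀ {v}, u ⋖ v → v ≤ y := fun {v} hv => by
    have hadj := hNA u v hv
    rw [← hyu] at hadj
    rcases hAC y v hadj with hyv | hvy
    · obtain rfl | hyv := hyv.eq_or_lt
      · exact absurd hadj (hθ.not_adjColor_self _)
      · exact absurd hyv (hv.2 huy)
    · exact hvy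
  exact ⟨y, le_y hv, le_y hw⟩

end Colored

theorem unique_max_and_min_general [PartialOrder P] [Fintype P] [Nonempty P]
    (θ : Γ → Γ → ℤ) (κ : P → Γ) (hθ : DynkinDatum θ)
    (hdc : GColoredDComplete θ κ) (hconn : ConnectedPoset P) :
    (∃! m : P, ∀ x : P, ¬m < x) ∧
      (ColoredLCB1 θ κ → ∃! m : P, ∀ x : P, ¬x < m) := by
  obtain ⟨-, -, -, hNA, hAC, -, hUCB⟩ := hdc
  refine ⟨?_, fun hLCB => ?_⟩
  · obtain ⟨m, hm⟩ := hconn.exists_forall_le fun _ _ _ =>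
      exists_upperBound_of_covBy hθ hNA hAC hUCB
    exact existsUnique_not_lt_of_forall_le hm
  · obtain ⟨m, hm⟩ := hconn.dual.exists_forall_le fun _ _ _ =>
      exists_upperBound_of_covBy hθ (hNA.dual hθ) hAC.dual hLCB.dual
    exact existsUnique_not_lt_of_forall_le (α := Pᵒᵈ) hm

/-- A connected finite Γ-colored d-complete poset has a unique maximal
element; if it is moreover Γ-colored minuscule, it also has a unique minimal element. -/
theorem unique_max_and_min [Fintype Γ] [PartialOrder P] [Fintype P] [Nonempty P]
    (θ : Γ → Γ → ℤ) (κ : P → Γ) (hθ : DynkinDatum θ)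
    (hdc : GColoredDComplete θ κ) (hconn : ConnectedPoset P) :
    (∃! m : P, ∀ x : P, ¬m < x) ∧
      (ColoredLCB1 θ κ → ∃! m : P, ∀ x : P, ¬x < m) :=
  unique_max_and_min_general θ κ hθ hdc hconn
end

section
/- Let P be a connected finite Γ-colored minuscule poset. Then either P is a chain and Γ is simply laced, or P is slant irreducible as a Γ-colored d-complete poset. -/
/-!
Common definitions: Dynkin diagram data, Γ-colored posets, and the coloring
properties EC, NA, AC, ICE2, UCB1, LCB1 from the paper, together with
Γ-colored d-complete and Γ-colored minuscule posets, top trees, slant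
irreducibility, extensions, lower frontier censuses, and full heaps.
-/

universe u v w

variable {Γ : Type u} {P : Type v}

/-!
Call `w < v` a link if their colors are adjacent and each is the only element of its color.
Then (LCB1) at `v` and (UCB1) at `w` leave `w` as the only element below `v`, and `v` as the
only element above `w`, of a color adjacent to the other's; consequently every cover of `v`,
and every element covered by `w`, forms a link with it. If `P` is not slant irreducible, a
cover `x ⋖ y` of the top tree with `y` alone in its color is a link, and connectedness
propagates links through every cover of `P`. So all colors occur once and every cover
`a ⋖ b` satisfies `Ioi a ⊆ Ici b`, `Iio b ⊆ Iic a`, which makes the connected poset `P` a chain;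
finally (LCB1) or (UCB1) at the single element of a color `b` bounds `-θ a b` by `1` for
every adjacent color `a`.
-/

theorem Set.Finite.subsingleton_of_finsum_mem_le_one {α : Type*} {s : Set α} (hs : s.Finite)
    {f : α → ℤ} (hf : ∀ x ∈ s, 1 ≤ f x) (h : ∑ᶠ x ∈ s, f x ≤ 1) : s.Subsingleton := by
  rw [← hs.coe_toFinset, finsum_mem_coe_finset] at h
  have hcard : (hs.toFinset.card : ℤ) ≤ 1 :=
    calc (hs.toFinset.card : ℤ) = ∑ _x ∈ hs.toFinset, (1 : ℤ) := by simp
      _ ≤ ∑ x ∈ hs.toFinset, f x :=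
        Finset.sum_le_sum fun x hx => hf x (hs.mem_toFinset.1 hx)
      _ ≤ 1 := h
  intro a ha b hb
  exact Finset.card_le_one.1 (by exact_mod_cast hcard) a (hs.mem_toFinset.2 ha) b
    (hs.mem_toFinset.2 hb)

theorem ConnectedPoset.covBy_induction {α : Type*} [PartialOrder α] [LocallyFiniteOrder α]
    (hc : ConnectedPoset α) {p : α → Prop} (hp : ∃ a, p a)
    (h : ∀ ⦃a b⦄, a ⋖ b → (p a ↔ p b)) (a : α) : p a := by
  have hup : Monotone p := (monotone_iff_forall_covBy p).2 fun _ _ hab => (h hab).1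
  have hdown : Antitone p := (antitone_iff_forall_covBy p).2 fun _ _ hab => (h hab).2
  by_contra ha
  obtain ⟨x, hx, y, hy, hxy | hyx⟩ := hc {a | p a} hp ⟨a, ha⟩
  · exact hy (hup hxy hx)
  · exact hy (hdown hyx hx)

theorem ConnectedPoset.isChain_univ {α : Type*} [PartialOrder α] [LocallyFiniteOrder α]
    (hc : ConnectedPoset α) (hup : ∀ ⦃a b : α⦄, a ⋖ b → ∀ ⦃c⦄, a < c → b ≤ c)
    (hdown : ∀ ⦃a b : α⦄, a ⋖ b → ∀ ⦃c⦄, c < b → c ≤ a) :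
    IsChain (· ≤ ·) (Set.univ : Set α) := by
  intro x _ y _ _
  refine hc.covBy_induction (p := fun y => x ≤ y ∨ y ≤ x) ⟨x, .inl le_rfl⟩
    (fun a b hab => ⟨?_, ?_⟩) y
  · rintro (hxa | hax)
    · exact .inl (hxa.trans hab.le)
    · obtain rfl | hax := hax.eq_or_lt
      · exact .inl hab.le
      · exact .inr (hup hab hax)
  · rintro (hxb | hbx)
    · obtain rfl | hxb := hxb.eq_or_lt
      · exact .inr hab.le
      · exact .inl (hdown hab hxb)
    · exact .inr (hab.le.trans hbx)

section ColoredPoset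

variable {θ : Γ → Γ → ℤ} {a b : Γ}

theorem AdjColor.one_le_neg (h : AdjColor θ a b) : 1 ≤ -θ a b := by
  unfold AdjColor at h
  omega

theorem AdjColor.ne (hθ : DynkinDatum θ) (h : AdjColor θ a b) : a ≠ b := by
  rintro rfl
  have := hθ.1 a
  unfold AdjColor at h
  omega

theorem AdjColor.symm (hθ : DynkinDatum θ) (h : AdjColor θ a b) : AdjColor θ b a :=
  (hθ.2.1 b a (h.ne hθ).symm).lt_of_ne fun h0 => LT.lt.ne h ((hθ.2.2 a b (h.ne hθ)).2 h0)

variable [PartialOrder P] {κ : P → Γ} {x y : P}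

def ColorUnique (κ : P → Γ) (x : P) : Prop := ∀ y, κ y = κ x → y = x

theorem ColorUnique.mem_topTree (h : ColorUnique κ x) : x ∈ TopTree κ :=
  fun y hy hxy => hxy.ne' (h y hy)

theorem ColorUnique.not_lt (h : ColorUnique κ x) : ∀ y, κ y = κ x → ¬y < x :=
  fun y hy hyx => hyx.ne (h y hy)

theorem ColoredUCB1.uSet_subsingleton (hU : ColoredUCB1 θ κ) (hx : x ∈ TopTree κ) :
    (USet θ κ x).Subsingleton :=
  (hU x hx).1.subsingleton_of_finsum_mem_le_one (fun _ hy => hy.2.one_le_neg) (hU x hx).2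

theorem ColoredLCB1.lSet_subsingleton (hL : ColoredLCB1 θ κ)
    (hx : ∀ y, κ y = κ x → ¬y < x) : (LSet θ κ x).Subsingleton :=
  (hL x hx).1.subsingleton_of_finsum_mem_le_one (fun _ hy => hy.2.one_le_neg) (hL x hx).2

theorem ColoredUCB1.neg_le_one (hU : ColoredUCB1 θ κ) (hx : x ∈ TopTree κ)
    (hy : y ∈ USet θ κ x) : -θ (κ y) (κ x) ≤ 1 := by
  have := (hU x hx).2
  rwa [(hU.uSet_subsingleton hx).eq_singleton_of_mem hy, finsum_mem_singleton] at this

theorem ColoredLCB1.neg_le_one (hL : ColoredLCB1 θ κ) (hx : ∀ y, κ y = κ x → ¬y < x)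
    (hy : y ∈ LSet θ κ x) : -θ (κ y) (κ x) ≤ 1 := by
  have := (hL x hx).2
  rwa [(hL.lSet_subsingleton hx).eq_singleton_of_mem hy, finsum_mem_singleton] at this

theorem simplyLaced_of_forall_colorUnique (hθ : DynkinDatum θ) (hsurj : Function.Surjective κ)
    (hAC : ColoredAC θ κ) (hU : ColoredUCB1 θ κ) (hL : ColoredLCB1 θ κ)
    (h : ∀ x, ColorUnique κ x) : SimplyLaced θ := by
  intro a b hab
  obtain ⟨x, rfl⟩ := hsurj a
  obtain ⟨y, rfl⟩ := hsurj b
  rcases (hθ.2.1 _ _ hab).lt_or_eq with hadj | h0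
  · have hxy : x ≠ y := fun e => hab (congrArg κ e)
    have : -θ (κ x) (κ y) ≤ 1 := by
      rcases hAC x y hadj with hle | hle
      · exact hL.neg_le_one (h y).not_lt ⟨lt_of_le_of_ne hle hxy, hadj⟩
      · exact hU.neg_le_one (h y).mem_topTree ⟨lt_of_le_of_ne hle hxy.symm, hadj⟩
    omega
  · exact .inl h0

structure IsLink (θ : Γ → Γ → ℤ) (κ : P → Γ) (w v : P) : Prop where
  lt : w < v
  adj : AdjColor θ (κ w) (κ v)
  unique_left : ColorUnique κ w
  unique_right : ColorUnique κ v

structure LinkedAt (θ : Γ → Γ → ℤ) (κ : P → Γ) (x : P) : Prop where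
  unique : ColorUnique κ x
  upper : ∀ ⦃y⦄, x ⋖ y → IsLink θ κ x y
  lower : ∀ ⦃y⦄, y ⋖ x → IsLink θ κ y x

theorem isLink_of_coversIn_topTree [IsStronglyAtomic P] (hθ : DynkinDatum θ)
    (hEC : ColoredEC κ) (hNA : ColoredNA θ κ) (hU : ColoredUCB1 θ κ) (hL : ColoredLCB1 θ κ)
    (hxy : CoversIn (TopTree κ) x y) (hy : ColorUnique κ y) : IsLink θ κ x y := by
  obtain ⟨hx, -, hlt, hbetween⟩ := hxy
  obtain ⟨v, hxv, hvy⟩ := exists_covBy_le_of_lt hlt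
  have hvU : v ∈ USet θ κ x := ⟨hxv.lt, (hNA x v hxv).symm hθ⟩
  -- `v` is the only element of `U(x, P)`, so nothing above it shares its color
  have hv : v ∈ TopTree κ := fun z hz hvz =>
    hvz.ne (hU.uSet_subsingleton hx hvU ⟨hxv.lt.trans hvz, hz ▸ hvU.2⟩)
  obtain rfl : v = y := hvy.eq_of_not_lt (hbetween v hv hxv.lt)
  have hxL : x ∈ LSet θ κ v := ⟨hxv.lt, hNA x v hxv⟩
  refine ⟨hxv.lt, hNA x v hxv, fun z hz => ?_, hy⟩
  rcases hEC z x hz with hzx | hxz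
  · exact hL.lSet_subsingleton hy.not_lt ⟨hzx.trans_lt hxv.lt, hz ▸ hxL.2⟩ hxL
  · exact (hxz.eq_of_not_lt (hx z hz)).symm

namespace IsLink

variable {w v : P}

theorem ge_of_gt [IsStronglyAtomic P] (hθ : DynkinDatum θ) (hNA : ColoredNA θ κ)
    (hU : ColoredUCB1 θ κ) (hl : IsLink θ κ w v) {z : P} (hz : w < z) : v ≤ z := by
  obtain ⟨t, hwt, htz⟩ := exists_covBy_le_of_lt hz
  rwa [hU.uSet_subsingleton hl.unique_left.mem_topTree ⟨hl.lt, hl.adj.symm hθ⟩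
    ⟨hwt.lt, (hNA w t hwt).symm hθ⟩]

theorem le_of_lt [IsStronglyCoatomic P] (hNA : ColoredNA θ κ) (hL : ColoredLCB1 θ κ)
    (hl : IsLink θ κ w v) {z : P} (hz : z < v) : z ≤ w := by
  obtain ⟨t, hzt, htv⟩ := exists_le_covBy_of_lt hz
  rwa [hL.lSet_subsingleton hl.unique_right.not_lt ⟨htv.lt, hNA t v htv⟩ ⟨hl.lt, hl.adj⟩] at hzt

theorem of_right_covBy (hθ : DynkinDatum θ) (hNA : ColoredNA θ κ) (hAC : ColoredAC θ κ)
    (hU : ColoredUCB1 θ κ) (hL : ColoredLCB1 θ κ) (hl : IsLink θ κ w v) {v' : P}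
    (h : v ⋖ v') : IsLink θ κ v v' := by
  have hadj : AdjColor θ (κ v) (κ v') := hNA v v' h
  refine ⟨h.lt, hadj, hl.unique_right, fun z hz => ?_⟩
  have hzv : AdjColor θ (κ z) (κ v) := hz ▸ hadj.symm hθ
  have hne : z ≠ v := fun e => hzv.ne hθ (congrArg κ e)
  rcases hAC z v hzv with hzv' | hvz
  · obtain rfl : z = w :=
      hL.lSet_subsingleton hl.unique_right.not_lt ⟨lt_of_le_of_ne hzv' hne, hzv⟩ ⟨hl.lt, hl.adj⟩
    exact (hl.unique_left v' hz.symm).symm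
  · exact hU.uSet_subsingleton hl.unique_right.mem_topTree
      ⟨lt_of_le_of_ne hvz (Ne.symm hne), hzv⟩ ⟨h.lt, hadj.symm hθ⟩

theorem of_covBy_left (hθ : DynkinDatum θ) (hNA : ColoredNA θ κ) (hAC : ColoredAC θ κ)
    (hU : ColoredUCB1 θ κ) (hL : ColoredLCB1 θ κ) (hl : IsLink θ κ w v) {w' : P}
    (h : w' ⋖ w) : IsLink θ κ w' w := by
  have hadj : AdjColor θ (κ w') (κ w) := hNA w' w h
  refine ⟨h.lt, hadj, fun z hz => ?_, hl.unique_left⟩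
  have hzw : AdjColor θ (κ z) (κ w) := hz ▸ hadj
  have hne : z ≠ w := fun e => hzw.ne hθ (congrArg κ e)
  rcases hAC z w hzw with hzw' | hwz
  · exact hL.lSet_subsingleton hl.unique_left.not_lt ⟨lt_of_le_of_ne hzw' hne, hzw⟩ ⟨h.lt, hadj⟩
  · obtain rfl : z = v := hU.uSet_subsingleton hl.unique_left.mem_topTree
      ⟨lt_of_le_of_ne hwz (Ne.symm hne), hzw⟩ ⟨hl.lt, hl.adj.symm hθ⟩
    exact (hl.unique_right w' hz.symm).symm

theorem linkedAt_right [IsStronglyCoatomic P] (hθ : DynkinDatum θ) (hNA : ColoredNA θ κ)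
    (hAC : ColoredAC θ κ) (hU : ColoredUCB1 θ κ) (hL : ColoredLCB1 θ κ)
    (hl : IsLink θ κ w v) : LinkedAt θ κ v := by
  refine ⟨hl.unique_right, fun _ => hl.of_right_covBy hθ hNA hAC hU hL, fun y hyv => ?_⟩
  obtain rfl : y = w := (hl.le_of_lt hNA hL hyv.lt).eq_of_not_lt fun hyw => hyv.2 hyw hl.lt
  exact hl

theorem linkedAt_left [IsStronglyAtomic P] (hθ : DynkinDatum θ) (hNA : ColoredNA θ κ)
    (hAC : ColoredAC θ κ) (hU : ColoredUCB1 θ κ) (hL : ColoredLCB1 θ κ)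
    (hl : IsLink θ κ w v) : LinkedAt θ κ w := by
  refine ⟨hl.unique_left, fun y hwy => ?_, fun _ => hl.of_covBy_left hθ hNA hAC hU hL⟩
  obtain rfl : v = y := (hl.ge_of_gt hθ hNA hU hwy.lt).eq_of_not_lt fun hvy => hwy.2 hl.lt hvy
  exact hl

end IsLink

end ColoredPoset

theorem chain_or_slantIrreducible_general [PartialOrder P]
    (θ : Γ → Γ → ℤ) (κ : P → Γ) (hθ : DynkinDatum θ)
    (hmin : GColoredMinuscule θ κ) (hconn : ConnectedPoset P) :
    (IsChain (· ≤ ·) (Set.univ : Set P) ∧ SimplyLaced θ) ∨ SlantIrreducible κ := by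
  obtain ⟨⟨hfin, hsurj, hEC, hNA, hAC, -, hU⟩, hL⟩ := hmin
  let _ : LocallyFiniteOrder P := .ofFiniteIcc hfin
  by_cases hT : ∀ x y, CoversIn (TopTree κ) x y → ∃ z, z ≠ y ∧ κ z = κ y
  · exact .inr ⟨hconn, hT⟩
  push Not at hT
  obtain ⟨x, y, hxy, hy⟩ := hT
  have hlink : IsLink θ κ x y :=
    isLink_of_coversIn_topTree hθ hEC hNA hU hL hxy fun z hz => by_contra fun hne => hy z hne hz
  have hlinked : ∀ z, LinkedAt θ κ z :=
    hconn.covBy_induction ⟨x, hlink.linkedAt_left hθ hNA hAC hU hL⟩ fun a b hab =>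
      ⟨fun ha => (ha.upper hab).linkedAt_right hθ hNA hAC hU hL,
        fun hb => (hb.lower hab).linkedAt_left hθ hNA hAC hU hL⟩
  refine .inl ⟨hconn.isChain_univ ?_ ?_,
    simplyLaced_of_forall_colorUnique hθ hsurj hAC hU hL fun z => (hlinked z).unique⟩
  · exact fun a b hab c hac => ((hlinked a).upper hab).ge_of_gt hθ hNA hU hac
  · exact fun a b hab c hcb => ((hlinked b).lower hab).le_of_lt hNA hL hcb

/-- A connected finite Γ-colored minuscule poset is either a chain with
Γ simply laced, or slant irreducible as a Γ-colored d-complete poset. -/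
theorem chain_or_slantIrreducible [Fintype Γ] [PartialOrder P] [Fintype P] [Nonempty P]
    (θ : Γ → Γ → ℤ) (κ : P → Γ) (hθ : DynkinDatum θ)
    (hmin : GColoredMinuscule θ κ) (hconn : ConnectedPoset P) :
    (IsChain (· ≤ ·) (Set.univ : Set P) ∧ SimplyLaced θ) ∨ SlantIrreducible κ :=
  chain_or_slantIrreducible_general θ κ hθ hmin hconn
end

section
/- Let P be a finite poset with Ch(P) = P, i.e., every principal filter of P is a chain. Let Γ be the set P itself with integers θ_{xx} = 2 for all x, θ_{xy} = −1 if x ≠ y are neighbors in P, and θ_{xy} = 0 otherwise, and let κ = id_P. Then these integers satisfy the Dynkin diagram datum conditions, Γ is simply laced, and (P, Γ, κ) is a Γ-colored d-complete poset. -/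
/-!
Common definitions: Dynkin diagram data, Γ-colored posets, and the coloring
properties EC, NA, AC, ICE2, UCB1, LCB1 from the paper, together with
Γ-colored d-complete and Γ-colored minuscule posets, top trees, slant
irreducibility, extensions, lower frontier censuses, and full heaps.
-/

universe u v w

variable {Γ : Type u} {P : Type v}

/-- A finite poset all of whose principal filters are chains, colored by
itself via the identity with θ given by the Hasse diagram, is a simply laced
Γ-colored d-complete poset. -/
theorem selfColored_dComplete [PartialOrder P] [Fintype P] [Nonempty P]
    (hch : ∀ x : P, IsChain (· ≤ ·) (Set.Ici x))
    (θ : P → P → ℤ) (hdiag : ∀ x : P, θ x x = 2)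
    (hnbr : ∀ x y : P, x ≠ y → (x ⋖ y ∨ y ⋖ x) → θ x y = -1)
    (hfar : ∀ x y : P, x ≠ y → ¬(x ⋖ y ∨ y ⋖ x) → θ x y = 0) :
    DynkinDatum θ ∧ SimplyLaced θ ∧ GColoredDComplete θ (id : P → P) := by
  have hadj : ∀ x y : P, θ x y < 0 ↔ x ≠ y ∧ (x ⋖ y ∨ y ⋖ x) := by
    intro x y
    constructor
    · intro h
      by_cases hxy : x = y
      · subst hxy; rw [hdiag] at h; omega
      refine ⟨hxy, ?_⟩
      by_contra hc
      rw [hfar x y hxy hc] at h; omega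
    · rintro ⟨hne, hc⟩; rw [hnbr x y hne hc]; omega
  refine ⟨⟨hdiag, ?_, ?_⟩, ?_, ?_, ?_, ?_, ?_, ?_, ?_, ?_⟩
  · -- off-diagonal ≤ 0
    intro a b hab
    by_cases hc : a ⋖ b ∨ b ⋖ a
    · rw [hnbr a b hab hc]; omega
    · rw [hfar a b hab hc]
  · -- zero symmetry
    intro a b hab
    by_cases hc : a ⋖ b ∨ b ⋖ a
    · rw [hnbr a b hab hc, hnbr b a hab.symm hc.symm]
    · rw [hfar a b hab hc, hfar b a hab.symm (fun h => hc h.symm)]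
  · -- simply laced
    intro a b hab
    by_cases hc : a ⋖ b ∨ b ⋖ a
    · right; exact hnbr a b hab hc
    · left; exact hfar a b hab hc
  · -- locally finite
    intro x y; exact Set.toFinite _
  · -- surjective
    exact Function.surjective_id
  · -- EC
    intro x y hxy; left; exact le_of_eq hxy
  · -- NA
    intro x y hxy
    have hne : x ≠ y := hxy.lt.ne
    exact (hadj x y).2 ⟨hne, Or.inl hxy⟩
  · -- AC
    intro x y h
    have := (hadj x y).1 h
    rcases this.2 with h' | h'
    · left; exact h'.lt.le
    · right; exact h'.lt.le
  · -- ICE2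
    intro a x y hx hy hlt _
    exfalso
    simp only [id] at hx hy
    subst hx; subst hy
    exact lt_irrefl _ hlt
  · -- UCB1
    intro x _
    have hsub : (USet θ (id : P → P) x).Subsingleton := by
      intro y1 hy1 y2 hy2
      obtain ⟨hlt1, ha1⟩ := hy1
      obtain ⟨hlt2, ha2⟩ := hy2
      have hc1 : x ⋖ y1 := by
        rcases ((hadj y1 x).1 ha1).2 with h | h
        · exact absurd h.lt (not_lt_of_gt hlt1)
        · exact h
      have hc2 : x ⋖ y2 := by
        rcases ((hadj y2 x).1 ha2).2 with h | h
        · exact absurd h.lt (not_lt_of_gt hlt2)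
        · exact h
      by_contra hne
      rcases (hch x) (le_of_lt hlt1) (le_of_lt hlt2) hne with h | h
      · exact hc2.2 hlt1 (lt_of_le_of_ne h hne)
      · exact hc1.2 hlt2 (lt_of_le_of_ne h (Ne.symm hne))
    refine ⟨Set.toFinite _, ?_⟩
    rcases hsub.eq_empty_or_singleton with he | ⟨y0, he⟩
    · rw [he, finsum_mem_empty]; omega
    · rw [he, finsum_mem_singleton]
      have hy0 : y0 ∈ USet θ (id : P → P) x := he ▸ rfl
      obtain ⟨hlt, ha⟩ := hy0
      have := (hadj y0 x).1 ha
      simp only [id]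
      rw [hnbr y0 x this.1 this.2]
      omega
end

section
/- Let P be a connected finite Γ-colored minuscule poset with Γ simply laced, and suppose P is a chain. Then κ : P → Γ is a bijection, and for all x, y ∈ P, x is covered by y in P if and only if κ(x) and κ(y) are adjacent in Γ. (That is, P has type A standard: Γ is a path graph and κ identifies the Hasse diagram of the chain P with Γ.) -/
/-!
Common definitions: Dynkin diagram data, Γ-colored posets, and the coloring
properties EC, NA, AC, ICE2, UCB1, LCB1 from the paper, together with
Γ-colored d-complete and Γ-colored minuscule posets, top trees, slant
irreducibility, extensions, lower frontier censuses, and full heaps.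
-/

universe u v w

variable {Γ : Type u} {P : Type v}

section MyAux
variable {Γ : Type u} {P : Type v}

lemma myAdjSymm {θ : Γ → Γ → ℤ} (hθ : DynkinDatum θ) {a b : Γ} (h : θ a b < 0) : θ b a < 0 := by
  have hne : a ≠ b := by rintro rfl; have := hθ.1 a; omega
  have h1 := hθ.2.1 b a hne.symm
  rcases lt_or_eq_of_le h1 with h2 | h2
  · exact h2
  · have := (hθ.2.2 a b hne).mpr h2
    omega

lemma myExistsCov [PartialOrder P] [Fintype P] {x y : P} (h : x < y) :
    ∃ m : P, x ⋖ m ∧ m ≤ y := by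
  obtain ⟨m, hm, hmin⟩ := (wellFounded_lt (α := P)).has_min (Set.Ioc x y) ⟨y, h, le_refl y⟩
  exact ⟨m, ⟨hm.1, fun z hz hz' => hmin z ⟨hz, (le_of_lt hz').trans hm.2⟩ hz'⟩, hm.2⟩

lemma myTwoMemAbsurd [PartialOrder P] [Fintype P] {θ : Γ → Γ → ℤ} {κ : P → Γ} {x u v : P}
    (hfin : (USet θ κ x).Finite) (hle : (∑ᶠ y ∈ USet θ κ x, -θ (κ y) (κ x)) ≤ 1)
    (hu : u ∈ USet θ κ x) (hv : v ∈ USet θ κ x) (huv : u ≠ v) : False := by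
  classical
  rw [finsum_mem_eq_finite_toFinset_sum _ hfin] at hle
  have hsub : ({u, v} : Finset P) ⊆ hfin.toFinset := by
    intro z hz
    rw [Set.Finite.mem_toFinset]
    rcases Finset.mem_insert.mp hz with rfl | hz
    · exact hu
    · rw [Finset.mem_singleton.mp hz]; exact hv
  have h2 : (2 : ℤ) ≤ ∑ z ∈ ({u, v} : Finset P), -θ (κ z) (κ x) := by
    rw [Finset.sum_pair huv]
    have h3 : θ (κ u) (κ x) < 0 := hu.2
    have h4 : θ (κ v) (κ x) < 0 := hv.2
    omega
  have h5 := Finset.sum_le_sum_of_subset_of_nonneg hsub (fun z hz _ => by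
    have h6 : θ (κ z) (κ x) < 0 := (hfin.mem_toFinset.mp hz).2
    show (0 : ℤ) ≤ -θ (κ z) (κ x)
    omega)
  omega

lemma myChainInj [PartialOrder P] [Fintype P]
    (θ : Γ → Γ → ℤ) (κ : P → Γ) (hθ : DynkinDatum θ) (hsl : SimplyLaced θ)
    (hmin : GColoredMinuscule θ κ)
    (hchain : IsChain (· ≤ ·) (Set.univ : Set P)) :
    Function.Injective κ := by
  obtain ⟨⟨hlf, hsurj, hEC, hNA, hAC, hICE2, hUCB1⟩, hLCB1⟩ := hmin
  by_contra hninj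
  have hS : ∃ x : P, ∃ j : P, x < j ∧ κ j = κ x := by
    simp only [Function.Injective, not_forall] at hninj
    obtain ⟨u, v, huv, hne⟩ := hninj
    rcases hchain (Set.mem_univ u) (Set.mem_univ v) hne with h | h
    · exact ⟨u, v, lt_of_le_of_ne h hne, huv.symm⟩
    · exact ⟨v, u, lt_of_le_of_ne h (Ne.symm hne), huv⟩
  obtain ⟨x, ⟨y, hxy, hκy⟩, hmax⟩ :=
    (wellFounded_gt (α := P)).has_min {i : P | ∃ j : P, i < j ∧ κ j = κ i} hS
  obtain ⟨m, hcov, hmy⟩ := myExistsCov hxy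
  have hmb : θ (κ x) (κ m) < 0 := hNA x m hcov
  have hba : κ m ≠ κ x := by
    intro h; rw [h, hθ.1] at hmb; omega
  have hmney : m ≠ y := by
    rintro rfl; exact hba hκy
  have hm_lt_y : m < y := lt_of_le_of_ne hmy hmney
  obtain ⟨m', hcov', hm'y⟩ := myExistsCov hm_lt_y
  by_cases hcase : m' = y
  · rw [hcase] at hcov'
    have hIoo : Set.Ioo x y = {m} := by
      ext z
      constructor
      · rintro ⟨h1, h2⟩
        by_contra hzm
        have hzm' : z ≠ m := hzm
        rcases hchain (Set.mem_univ z) (Set.mem_univ m) hzm' with h | h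
        · exact hcov.2 h1 (lt_of_le_of_ne h hzm')
        · exact hcov'.2 (lt_of_le_of_ne h (Ne.symm hzm')) h2
      · rintro rfl; exact ⟨hcov.1, hm_lt_y⟩
    have hsum := hICE2 (κ x) x y rfl hκy hxy (fun z hz => by
      rw [hIoo, Set.mem_singleton_iff] at hz; subst hz; exact hba)
    rw [hIoo, finsum_mem_singleton] at hsum
    rcases hsl (κ m) (κ x) hba with h | h <;> omega
  · have hm'_lt_y : m' < y := lt_of_le_of_ne hm'y hcase
    have hmmax : ∀ z : P, κ z = κ m → ¬m < z := fun z hz hlt =>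
      hmax m ⟨z, hlt, hz⟩ hcov.1
    obtain ⟨hUfin, hUle⟩ := hUCB1 m hmmax
    have hy_mem : y ∈ USet θ κ m := ⟨hm_lt_y, by
      show θ (κ y) (κ m) < 0
      rw [hκy]; exact hmb⟩
    have hm'_mem : m' ∈ USet θ κ m := ⟨hcov'.1, myAdjSymm hθ (hNA m m' hcov')⟩
    exact myTwoMemAbsurd hUfin hUle hm'_mem hy_mem hcase

lemma myLtCov [PartialOrder P] [Fintype P]
    (θ : Γ → Γ → ℤ) (κ : P → Γ) (hθ : DynkinDatum θ)
    (hNA : ColoredNA θ κ) (hUCB1 : ColoredUCB1 θ κ) (hinj : Function.Injective κ)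
    {x y : P} (hlt : x < y) (hadj : θ (κ x) (κ y) < 0) : x ⋖ y := by
  obtain ⟨m, hcov, hmy⟩ := myExistsCov hlt
  by_cases h : m = y
  · exact h ▸ hcov
  · exfalso
    have hxmax : ∀ z : P, κ z = κ x → ¬x < z := fun z hz hlt' =>
      absurd (hinj hz) (ne_of_gt hlt')
    obtain ⟨hUfin, hUle⟩ := hUCB1 x hxmax
    have hm_mem : m ∈ USet θ κ x := ⟨hcov.1, myAdjSymm hθ (hNA x m hcov)⟩
    have hy_mem : y ∈ USet θ κ x := ⟨hlt, myAdjSymm hθ hadj⟩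
    exact myTwoMemAbsurd hUfin hUle hm_mem hy_mem h

end MyAux

/-- A connected finite Γ-colored minuscule poset which is a chain, with
Γ simply laced, has type A standard: κ is a bijection identifying the Hasse diagram
of the chain with the path graph Γ. -/
theorem chain_typeA_standard [Fintype Γ] [PartialOrder P] [Fintype P] [Nonempty P]
    (θ : Γ → Γ → ℤ) (κ : P → Γ) (hθ : DynkinDatum θ) (hsl : SimplyLaced θ)
    (hmin : GColoredMinuscule θ κ) (hconn : ConnectedPoset P)
    (hchain : IsChain (· ≤ ·) (Set.univ : Set P)) :
    Function.Bijective κ ∧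
      ∀ x y : P, (x ⋖ y ∨ y ⋖ x) ↔ AdjColor θ (κ x) (κ y) := by
  have hinj : Function.Injective κ := myChainInj θ κ hθ hsl hmin hchain
  obtain ⟨⟨hlf, hsurj, hEC, hNA, hAC, hICE2, hUCB1⟩, hLCB1⟩ := hmin
  refine ⟨⟨hinj, hsurj⟩, fun x y => ⟨?_, ?_⟩⟩
  · rintro (h | h)
    · exact hNA x y h
    · exact myAdjSymm hθ (hNA y x h)
  · intro hadj
    have hadj' : θ (κ x) (κ y) < 0 := hadj
    have hne : x ≠ y := by
      rintro rfl; rw [hθ.1] at hadj'; omega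
    rcases hAC x y hadj with h | h
    · exact Or.inl (myLtCov θ κ hθ hNA hUCB1 hinj (lt_of_le_of_ne h hne) hadj')
    · exact Or.inr (myLtCov θ κ hθ hNA hUCB1 hinj (lt_of_le_of_ne h hne.symm)
        (myAdjSymm hθ hadj'))
end
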